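/- Suppose μ₀ + λμ₁ + ... + λ^{r-1}μ_{r-1} is a Hermitian associative deformation up to order r-1 of a *-algebra (A, μ₀, *) with 1/2 ∈ R. If μ_r solves the associativity condition δμ_r = -½ Σ_{s=1}^{r-1}[μ_s, μ_{r-s}] at order r, then the Hermitian part ½(μ_r + μ_r*) also solves it. Hence if an associative deformation up to order r exists extending the given one, a Hermitian deformation up to order r exists. -/

import Mathlib

/-- The ring `C = R(i)` over an ordered ring `R`, axiomatized through its conjugation
`z ↦ z̄`, its imaginary unit `i` (with `i² = -1`), the fact that every element is of the
form `a + i b` with `a, b` real (i.e. conjugation-fixed), and the positive cone `P ⊆ R`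
making `R = -P ∪ {0} ∪ P` a disjoint union with `P` closed under `+` and `·`. -/
structure OrderedScalars (C : Type*) [CommRing C] where
  /-- complex conjugation -/
  conj : C →+* C
  conj_conj : ∀ z : C, conj (conj z) = z
  /-- the imaginary unit -/
  i : C
  i_mul_i : i * i = -1
  conj_i : conj i = -i
  /-- every element is `a + i b` with `a`, `b` real -/
  exists_re_im : ∀ z : C, ∃ a b : C, conj a = a ∧ conj b = b ∧ z = a + i * b
  /-- the positive cone of the ordered ring `R = {z | conj z = z}` -/
  P : Set C
  P_real : ∀ a ∈ P, conj a = a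
  P_add : ∀ a ∈ P, ∀ b ∈ P, a + b ∈ P
  P_mul : ∀ a ∈ P, ∀ b ∈ P, a * b ∈ P
  P_ne_zero : ∀ a ∈ P, a ≠ 0
  P_asymm : ∀ a ∈ P, -a ∉ P
  P_total : ∀ a : C, conj a = a → a ≠ 0 → a ∈ P ∨ -a ∈ P

/-- `a ≥ 0` in `R ⊆ C`. -/
def OrderedScalars.nonneg {C : Type*} [CommRing C] (S : OrderedScalars C) (a : C) : Prop :=
  a ∈ S.P ∨ a = 0


/-- A `*`-algebra over `C = R(i)`: an associative unital `C`-algebra together with a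
`C`-antilinear involutive anti-automorphism `st`. -/
structure StarAlgebraOn {C : Type*} [CommRing C] (S : OrderedScalars C)
    (A : Type*) [Ring A] [Algebra C A] where
  st : A → A
  st_add : ∀ x y : A, st (x + y) = st x + st y
  st_mul : ∀ x y : A, st (x * y) = st y * st x
  st_st : ∀ x : A, st (st x) = x
  st_smul : ∀ (c : C) (x : A), st (c • x) = S.conj c • st x


/-- Hochschild `n`-cochains of the algebra `A` (with values in `A`). -/
def Cochain (A : Type*) (n : ℕ) := (Fin n → A) → A

/-- The Gerstenhaber product `φ ⋄ ψ` of an `n`-cochain `φ` and an `m`-cochain `ψ`: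
`(φ ⋄ ψ)(A₁,…,A_{n+m-1}) = Σ_{i=1}^{n} (-1)^{(i-1)(m-1)} φ(A₁,…,A_{i-1}, ψ(Aᵢ,…,A_{i+m-1}), A_{i+m},…)`. -/
def gerst {A : Type*} [Ring A] {n m : ℕ} (φ : Cochain A n) (ψ : Cochain A m) :
    Cochain A (n + m - 1) := fun a =>
  ∑ i : Fin n, ((-1 : ℤ) ^ ((i : ℕ) * (m - 1))) •
    φ (fun j : Fin n =>
      if hlt : (j : ℕ) < (i : ℕ) then
        a ⟨(j : ℕ), by have hj := j.isLt; have hi := i.isLt; omega⟩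
      else if heq : (j : ℕ) = (i : ℕ) then
        ψ (fun k : Fin m =>
          a ⟨(i : ℕ) + (k : ℕ), by have hk := k.isLt; have hi := i.isLt; omega⟩)
      else
        a ⟨(j : ℕ) + m - 1, by have hj := j.isLt; omega⟩)

/-- Identification of cochain spaces of equal arity. -/
def reindex {A : Type*} {n m : ℕ} (h : n = m) (φ : Cochain A n) : Cochain A m :=
  fun a => φ fun j => a (Fin.cast h j)

/-- The multiplication of `A` as a `2`-cochain `μ₀`. -/
def mul2 (A : Type*) [Ring A] : Cochain A 2 := fun a => a 0 * a 1

/-- The action of the `*`-involution on `n`-cochains: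
`φ*(A₁ ⊗ ⋯ ⊗ Aₙ) = (φ(Aₙ* ⊗ ⋯ ⊗ A₁*))*`. -/
def stC {C : Type*} [CommRing C] {S : OrderedScalars C}
    {A : Type*} [Ring A] [Algebra C A] (T : StarAlgebraOn S A)
    {n : ℕ} (φ : Cochain A n) : Cochain A n :=
  fun a => T.st (φ fun j => T.st (a j.rev))

/-- The Hochschild differential `δφ = (-1)^{n-1} [μ₀, φ]` of an `n`-cochain (`n = d + 1`),
where `[·,·]` is the Gerstenhaber bracket: `[μ₀, φ] = μ₀ ⋄ φ - (-1)^{(2-1)(n-1)} φ ⋄ μ₀`. -/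
def hdelta {A : Type*} [Ring A] {d : ℕ} (φ : Cochain A (d + 1)) : Cochain A (d + 2) :=
  fun a => ((-1 : ℤ) ^ d) •
    (reindex (by omega) (gerst (mul2 A) φ) a -
      ((-1 : ℤ) ^ d) • reindex (by omega) (gerst φ (mul2 A)) a)


/-- The Gerstenhaber bracket `[φ, ψ] = φ ⋄ ψ - (-1)^{(2-1)(2-1)} ψ ⋄ φ` of two
`2`-cochains. -/
def brack22 {A : Type*} [Ring A] (φ ψ : Cochain A 2) : Cochain A 3 := fun a =>
  reindex (by omega) (gerst φ ψ) a -
    ((-1 : ℤ) ^ (1 * 1)) • reindex (by omega) (gerst ψ φ) a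

section Eval
variable {A : Type*} [Ring A]

lemma app2 {A : Type*} (φ : Cochain A 2) {f g : Fin 2 → A} (h0 : f 0 = g 0) (h1 : f 1 = g 1) :
    φ f = φ g :=
  congrArg φ (funext fun j => by fin_cases j <;> assumption)

lemma app3 {A : Type*} (φ : Cochain A 3) {f g : Fin 3 → A} (h0 : f 0 = g 0) (h1 : f 1 = g 1)
    (h2 : f 2 = g 2) : φ f = φ g :=
  congrArg φ (funext fun j => by fin_cases j <;> assumption)

lemma gerst22_eval (φ ψ : Cochain A 2) (a : Fin 3 → A) (hh : 2 + 2 - 1 = 3) :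
    reindex hh (gerst φ ψ) a = φ ![ψ ![a 0, a 1], a 2] - φ ![a 0, ψ ![a 1, a 2]] := by
  simp only [reindex, gerst, Fin.sum_univ_two, Fin.val_zero, Fin.val_one, Nat.zero_mul,
    Nat.one_mul, Nat.reduceSub, pow_zero, one_smul, pow_one, neg_smul, sub_eq_add_neg]
  refine congrArg₂ (· + ·) (app2 φ ?_ ?_) (congrArg (fun x => -x) (app2 φ ?_ ?_)) <;> norm_num <;>
    first
      | rfl
      | exact app2 ψ rfl rfl


lemma brack22_eval (φ ψ : Cochain A 2) (a : Fin 3 → A) :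
    brack22 φ ψ a = (φ ![ψ ![a 0, a 1], a 2] - φ ![a 0, ψ ![a 1, a 2]]) +
      (ψ ![φ ![a 0, a 1], a 2] - ψ ![a 0, φ ![a 1, a 2]]) := by
  simp only [brack22, gerst22_eval, one_mul, pow_one, neg_smul, one_smul, sub_neg_eq_add]

lemma hdelta2_eval (φ : Cochain A 2) (a : Fin 3 → A) :
    hdelta φ a = a 0 * φ ![a 1, a 2] - φ ![a 0 * a 1, a 2] + φ ![a 0, a 1 * a 2]
      - φ ![a 0, a 1] * a 2 := by
  simp only [hdelta, gerst22_eval, pow_one, neg_smul, one_smul, mul2, Matrix.cons_val_zero,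
    Matrix.cons_val_one, Matrix.head_cons]
  abel


variable {C : Type*} [CommRing C] {S : OrderedScalars C} [Algebra C A] (T : StarAlgebraOn S A)

lemma st_zero : T.st 0 = 0 := by
  have := T.st_add 0 0
  simpa using this.symm

lemma st_neg (x : A) : T.st (-x) = - T.st x := by
  have h := T.st_add x (-x)
  simp only [add_neg_cancel, st_zero] at h
  linear_combination (norm := abel) -h

lemma st_sub (x y : A) : T.st (x - y) = T.st x - T.st y := by
  rw [sub_eq_add_neg, T.st_add, st_neg, sub_eq_add_neg]

lemma st_sum {ι : Type*} (s : Finset ι) (f : ι → A) :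
    T.st (∑ i ∈ s, f i) = ∑ i ∈ s, T.st (f i) := by
  classical
  induction s using Finset.induction_on with
  | empty => simp [st_zero]
  | insert x s hx ih => simp [Finset.sum_insert hx, T.st_add, ih]

lemma stC2_eval (φ : Cochain A 2) (a : Fin 2 → A) :
    stC T φ a = T.st (φ ![T.st (a 1), T.st (a 0)]) :=
  congrArg T.st (app2 φ rfl rfl)

lemma stC3_eval (φ : Cochain A 3) (a : Fin 3 → A) :
    stC T φ a = T.st (φ ![T.st (a 2), T.st (a 1), T.st (a 0)]) :=
  congrArg T.st (app3 φ rfl rfl rfl)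

lemma stC_stC {n : ℕ} (φ : Cochain A n) : stC T (stC T φ) = φ := by
  funext a
  show T.st (T.st (φ fun j => T.st (T.st (a j.rev.rev)))) = φ a
  simp only [T.st_st, Fin.rev_rev]


lemma stC3_brack (φ ψ : Cochain A 2) (a : Fin 3 → A) :
    stC T (brack22 φ ψ) a = - brack22 (stC T φ) (stC T ψ) a := by
  rw [stC3_eval]
  simp only [brack22_eval, stC2_eval, Matrix.cons_val_zero, Matrix.cons_val_one,
    Matrix.head_cons, Matrix.cons_val_two, Matrix.tail_cons, st_sub, T.st_add, T.st_st]
  abel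

lemma stC3_hdelta (φ : Cochain A 2) (a : Fin 3 → A) :
    stC T (hdelta φ) a = - hdelta (stC T φ) a := by
  rw [stC3_eval]
  simp only [hdelta2_eval, stC2_eval, Matrix.cons_val_zero, Matrix.cons_val_one,
    Matrix.head_cons, Matrix.cons_val_two, Matrix.tail_cons, st_sub, T.st_add, T.st_mul,
    T.st_st]
  abel

lemma hdelta_add (φ ψ : Cochain A 2) (a : Fin 3 → A) :
    hdelta (fun b => φ b + ψ b) a = hdelta φ a + hdelta ψ a := by
  refine (hdelta2_eval (fun b => φ b + ψ b) a).trans ?_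
  simp only [hdelta2_eval, mul_add, add_mul]
  abel

lemma hdelta_smul (c : C) (φ : Cochain A 2) (a : Fin 3 → A) :
    hdelta (fun b => c • φ b) a = c • hdelta φ a := by
  refine (hdelta2_eval (fun b => c • φ b) a).trans ?_
  simp only [hdelta2_eval, mul_smul_comm, smul_mul_assoc, smul_sub, smul_add]

end Eval

/-- Let `μ₀ + λμ₁ + ⋯ + λ^{r-1}μ_{r-1}` be a Hermitian associative
deformation up to order `r-1` of a `*`-algebra `(A, μ₀, *)` with `1/2 ∈ R`.  If `μ_r`
solves the associativity condition `δμ_r = -½ Σ_{s=1}^{r-1} [μ_s, μ_{r-s}]` at order `r`,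
then so does the Hermitian part `½(μ_r + μ_r*)`; hence if an associative deformation up to
order `r` exists extending the given one, a Hermitian one exists as well. -/
theorem hermitian_part_solves_associativity
    {C : Type*} [CommRing C] (S : OrderedScalars C)
    {A : Type*} [Ring A] [Algebra C A] (T : StarAlgebraOn S A)
    -- `1/2 ∈ R`
    (h : C) (h_real : S.conj h = h) (h_half : h + h = 1)
    (r : ℕ) (hr : 1 ≤ r) (μ : ℕ → Cochain A 2)
    -- `μ₀` is the undeformed product
    (hμ0 : μ 0 = mul2 A)
    -- Hermitian up to order `r - 1`
    (hherm : ∀ s, s ≤ r - 1 → stC T (μ s) = μ s)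
    -- associativity conditions up to order `r`
    (hass : ∀ t, 1 ≤ t → t ≤ r → ∀ a,
      hdelta (μ t) a = - (h • ∑ s ∈ Finset.Ioo 0 t, brack22 (μ s) (μ (t - s)) a)) :
    -- the Hermitian part `½(μ_r + μ_r*)` is Hermitian and also solves the order-`r`
    -- associativity condition
    let ν : Cochain A 2 := fun a => h • (μ r a + stC T (μ r) a)
    stC T ν = ν ∧
    (∀ a, hdelta ν a = - (h • ∑ s ∈ Finset.Ioo 0 r, brack22 (μ s) (μ (r - s)) a)) := by
  intro ν
  constructor
  · funext a
    rw [stC2_eval]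
    show T.st (h • (μ r ![T.st (a 1), T.st (a 0)] + stC T (μ r) ![T.st (a 1), T.st (a 0)])) =
      h • (μ r a + stC T (μ r) a)
    rw [T.st_smul, h_real, T.st_add, ← stC2_eval T (μ r) a,
      ← stC2_eval T (stC T (μ r)) a, stC_stC]
    exact congrArg (h • ·) (add_comm _ _)
  · intro a
    set B := ∑ s ∈ Finset.Ioo 0 r, brack22 (μ s) (μ (r - s)) a with hB
    have e1 : stC T (hdelta (μ r)) a = h • B := by
      rw [stC3_eval, hass r hr le_rfl, st_neg, T.st_smul, h_real, st_sum]
      have e2 : ∀ s ∈ Finset.Ioo 0 r,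
          T.st (brack22 (μ s) (μ (r - s)) ![T.st (a 2), T.st (a 1), T.st (a 0)]) =
            - brack22 (μ s) (μ (r - s)) a := by
        intro s hs
        simp only [Finset.mem_Ioo] at hs
        rw [← stC3_eval, stC3_brack, hherm s (by omega), hherm (r - s) (by omega)]
      rw [Finset.sum_congr rfl e2, Finset.sum_neg_distrib, smul_neg, neg_neg]
    have hmain : hdelta (μ r) a = -(h • B) := hass r hr le_rfl a
    have hC : hdelta (stC T (μ r)) a = -(h • B) := by
      have h2 := (stC3_hdelta T (μ r) a).symm.trans e1
      rw [← h2, neg_neg]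
    show hdelta (fun b => h • (μ r b + stC T (μ r) b)) a = -(h • B)
    refine (hdelta_smul h (fun b => μ r b + stC T (μ r) b) a).trans ?_
    refine (congrArg (h • ·) (hdelta_add (μ r) (stC T (μ r)) a)).trans ?_
    rw [hmain, hC]
    have : -(h • B) + -(h • B) = -B := by rw [← neg_add, ← add_smul, h_half, one_smul]
    rw [this, smul_neg]
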